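/- Consider an L-layer feed-forward network specified by dimensions d₀, …, d_L ∈ ℕ, weight matrices W⁽ℓ⁾ ∈ ℝ^{d_ℓ × d_{ℓ−1}}, biases b⁽ℓ⁾ ∈ ℝ^{d_ℓ} for ℓ = 1, …, L, and activation functions σ⁽ℓ⁾ : ℝ → ℝ for ℓ = 1, …, L−1, each monotonically non-decreasing and continuous. Fix an input x ∈ ℝ^{d₀}, and for ε ≥ 0 define the IBP bounds recursively: ū⁽⁰⁾(ε) = x + ε·𝟙 and u̲⁽⁰⁾(ε) = x − ε·𝟙; for ℓ = 1, …, L set z̄⁽ℓ⁾(ε) = W⁽ℓ⁾·((ū⁽ℓ−1⁾(ε) + u̲⁽ℓ−1⁾(ε))/2) + |W⁽ℓ⁾|·((ū⁽ℓ−1⁾(ε) − u̲⁽ℓ−1⁾(ε))/2) + b⁽ℓ⁾ and z̲⁽ℓ⁾(ε) = W⁽ℓ⁾·((ū⁽ℓ−1⁾(ε) + u̲⁽ℓ−1⁾(ε))/2) − |W⁽ℓ⁾|·((ū⁽ℓ−1⁾(ε) − u̲⁽ℓ−1⁾(ε))/2) + b⁽ℓ⁾, and for ℓ ≤ L−1 set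 ū⁽ℓ⁾(ε) = σ⁽ℓ⁾ applied entrywise to z̄⁽ℓ⁾(ε) and u̲⁽ℓ⁾(ε) = σ⁽ℓ⁾ applied entrywise to z̲⁽ℓ⁾(ε). Then every coordinate of ε ↦ z̄⁽ᴸ⁾(ε) is monotonically non-decreasing and continuous on [0, ∞), and every coordinate of ε ↦ z̲⁽ᴸ⁾(ε) is monotonically non-increasing and continuous on [0, ∞). -/

import Mathlib

/-- IBP upper bound of an affine layer `u ↦ W u + b` on the input interval `[lb, ub]`:
`z̄ = W·(ū+u̲)/2 + |W|·(ū−u̲)/2 + b`. -/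
noncomputable def ibpAffineUpper {m n : ℕ} (W : Matrix (Fin m) (Fin n) ℝ)
    (b : Fin m → ℝ) (lb ub : Fin n → ℝ) : Fin m → ℝ :=
  W.mulVec ((ub + lb) / 2) + (W.map fun a => |a|).mulVec ((ub - lb) / 2) + b

/-- IBP lower bound of an affine layer `u ↦ W u + b` on the input interval `[lb, ub]`:
`z̲ = W·(ū+u̲)/2 − |W|·(ū−u̲)/2 + b`. -/
noncomputable def ibpAffineLower {m n : ℕ} (W : Matrix (Fin m) (Fin n) ℝ)
    (b : Fin m → ℝ) (lb ub : Fin n → ℝ) : Fin m → ℝ :=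
  W.mulVec ((ub + lb) / 2) - (W.map fun a => |a|).mulVec ((ub - lb) / 2) + b

/-- Post-activation IBP bounds `(u̲⁽ℓ⁾(ε), ū⁽ℓ⁾(ε))` of a feed-forward network with
layer dimensions `d`, weights `W`, biases `b` and activations `σ` (applied entrywise),
propagating the input interval `[x − ε·𝟙, x + ε·𝟙]`. -/
noncomputable def ibpPostBounds (d : ℕ → ℕ)
    (W : ∀ ℓ : ℕ, Matrix (Fin (d (ℓ + 1))) (Fin (d ℓ)) ℝ)
    (b : ∀ ℓ : ℕ, Fin (d (ℓ + 1)) → ℝ)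
    (σ : ℕ → ℝ → ℝ) (x : Fin (d 0) → ℝ) (ε : ℝ) :
    ∀ ℓ : ℕ, (Fin (d ℓ) → ℝ) × (Fin (d ℓ) → ℝ)
  | 0 => (fun i => x i - ε, fun i => x i + ε)
  | (ℓ + 1) =>
      (fun i => σ ℓ (ibpAffineLower (W ℓ) (b ℓ) (ibpPostBounds d W b σ x ε ℓ).1
          (ibpPostBounds d W b σ x ε ℓ).2 i),
       fun i => σ ℓ (ibpAffineUpper (W ℓ) (b ℓ) (ibpPostBounds d W b σ x ε ℓ).1
          (ibpPostBounds d W b σ x ε ℓ).2 i))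

/-- Final-layer (pre-activation) IBP output lower bound `z̲⁽ᴸ⁾(ε)` of an
`(L'+1)`-layer network: the affine bounds of the last layer `W L', b L'` applied to
the post-activation bounds of layer `L'`. -/
noncomputable def ibpOutLower (d : ℕ → ℕ)
    (W : ∀ ℓ : ℕ, Matrix (Fin (d (ℓ + 1))) (Fin (d ℓ)) ℝ)
    (b : ∀ ℓ : ℕ, Fin (d (ℓ + 1)) → ℝ)
    (σ : ℕ → ℝ → ℝ) (x : Fin (d 0) → ℝ) (L' : ℕ) (ε : ℝ) : Fin (d (L' + 1)) → ℝ :=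
  ibpAffineLower (W L') (b L') (ibpPostBounds d W b σ x ε L').1
    (ibpPostBounds d W b σ x ε L').2

/-- Final-layer (pre-activation) IBP output upper bound `z̄⁽ᴸ⁾(ε)` of an
`(L'+1)`-layer network. -/
noncomputable def ibpOutUpper (d : ℕ → ℕ)
    (W : ∀ ℓ : ℕ, Matrix (Fin (d (ℓ + 1))) (Fin (d ℓ)) ℝ)
    (b : ∀ ℓ : ℕ, Fin (d (ℓ + 1)) → ℝ)
    (σ : ℕ → ℝ → ℝ) (x : Fin (d 0) → ℝ) (L' : ℕ) (ε : ℝ) : Fin (d (L' + 1)) → ℝ :=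
  ibpAffineUpper (W L') (b L') (ibpPostBounds d W b σ x ε L').1
    (ibpPostBounds d W b σ x ε L').2

/-!
Splitting `W = W⁺ - W⁻` into positive and negative parts, the IBP bounds of an affine layer are
`z̄ = W⁺ ū - W⁻ u̲ + b` and `z̲ = W⁺ u̲ - W⁻ ū + b`: the upper bound is nondecreasing in `ū` and
nonincreasing in `u̲`, and the lower bound the other way round. Monotone activations preserve this,
so by induction over the layers all intervals `[u̲⁽ℓ⁾(ε), ū⁽ℓ⁾(ε)]` widen as `ε` grows.
-/

open Matrix

theorem Matrix.mulVec_mono_of_nonneg {R m n : Type*} [Semiring R] [PartialOrder R]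
    [IsOrderedRing R] [Fintype n] {A : Matrix m n R} (hA : ∀ i j, 0 ≤ A i j) {u v : n → R}
    (huv : u ≤ v) :
    A *ᵥ u ≤ A *ᵥ v :=
  fun i => dotProduct_le_dotProduct_of_nonneg_left huv (hA i)

section AffineLayer

variable {m n : ℕ} (W : Matrix (Fin m) (Fin n) ℝ) (b : Fin m → ℝ)

theorem ibpAffineUpper_eq_posPart_negPart (lb ub : Fin n → ℝ) :
    ibpAffineUpper W b lb ub = W.map (·⁺) *ᵥ ub - W.map (·⁻) *ᵥ lb + b := by
  ext i
  simp only [ibpAffineUpper, Pi.add_apply, Pi.sub_apply, mulVec, dotProduct, map_apply,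
    Pi.div_apply, Pi.ofNat_apply, ← Finset.sum_add_distrib, ← Finset.sum_sub_distrib]
  congr 1
  refine Finset.sum_congr rfl fun j _ => ?_
  linear_combination (-(ub j + lb j) / 2) * posPart_sub_negPart (W i j)
    - ((ub j - lb j) / 2) * posPart_add_negPart (W i j)

theorem ibpAffineLower_eq_posPart_negPart (lb ub : Fin n → ℝ) :
    ibpAffineLower W b lb ub = W.map (·⁺) *ᵥ lb - W.map (·⁻) *ᵥ ub + b := by
  ext i
  simp only [ibpAffineLower, Pi.add_apply, Pi.sub_apply, mulVec, dotProduct, map_apply,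
    Pi.div_apply, Pi.ofNat_apply, ← Finset.sum_sub_distrib]
  congr 1
  refine Finset.sum_congr rfl fun j _ => ?_
  linear_combination (-(ub j + lb j) / 2) * posPart_sub_negPart (W i j)
    + ((ub j - lb j) / 2) * posPart_add_negPart (W i j)

variable {W b}

theorem ibpAffineUpper_mono {lb ub lb' ub' : Fin n → ℝ} (hlb : lb' ≤ lb) (hub : ub ≤ ub') :
    ibpAffineUpper W b lb ub ≤ ibpAffineUpper W b lb' ub' := by
  simp only [ibpAffineUpper_eq_posPart_negPart]
  gcongr
  · exact mulVec_mono_of_nonneg (fun i j => posPart_nonneg (W i j)) hub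
  · exact mulVec_mono_of_nonneg (fun i j => negPart_nonneg (W i j)) hlb

theorem ibpAffineLower_anti {lb ub lb' ub' : Fin n → ℝ} (hlb : lb' ≤ lb) (hub : ub ≤ ub') :
    ibpAffineLower W b lb' ub' ≤ ibpAffineLower W b lb ub := by
  simp only [ibpAffineLower_eq_posPart_negPart]
  gcongr
  · exact mulVec_mono_of_nonneg (fun i j => posPart_nonneg (W i j)) hlb
  · exact mulVec_mono_of_nonneg (fun i j => negPart_nonneg (W i j)) hub

theorem Continuous.ibpAffineUpper {α : Type*} [TopologicalSpace α] {lb ub : α → Fin n → ℝ}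
    (hlb : Continuous lb) (hub : Continuous ub) :
    Continuous fun a => ibpAffineUpper W b (lb a) (ub a) := by
  unfold _root_.ibpAffineUpper
  fun_prop

theorem Continuous.ibpAffineLower {α : Type*} [TopologicalSpace α] {lb ub : α → Fin n → ℝ}
    (hlb : Continuous lb) (hub : Continuous ub) :
    Continuous fun a => ibpAffineLower W b (lb a) (ub a) := by
  unfold _root_.ibpAffineLower
  fun_prop

end AffineLayer

section Network

variable (d : ℕ → ℕ) (W : ∀ ℓ : ℕ, Matrix (Fin (d (ℓ + 1))) (Fin (d ℓ)) ℝ)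
  (b : ∀ ℓ : ℕ, Fin (d (ℓ + 1)) → ℝ) (σ : ℕ → ℝ → ℝ) (x : Fin (d 0) → ℝ)

theorem ibpPostBounds_fst_antitone_snd_monotone (ℓ : ℕ) (hσ : ∀ k < ℓ, Monotone (σ k)) :
    Antitone (fun ε => (ibpPostBounds d W b σ x ε ℓ).1) ∧
      Monotone (fun ε => (ibpPostBounds d W b σ x ε ℓ).2) := by
  induction ℓ with
  | zero =>
    exact ⟨fun _ _ h i => sub_le_sub_left h (x i), fun _ _ h i => add_le_add_right h (x i)⟩
  | succ ℓ ih =>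
    obtain ⟨hlb, hub⟩ := ih fun k hk => hσ k (hk.trans ℓ.lt_succ_self)
    refine ⟨fun _ _ h i => hσ ℓ ℓ.lt_succ_self ?_, fun _ _ h i => hσ ℓ ℓ.lt_succ_self ?_⟩
    · exact ibpAffineLower_anti (hlb h) (hub h) i
    · exact ibpAffineUpper_mono (hlb h) (hub h) i

theorem continuous_ibpPostBounds (ℓ : ℕ) (hσ : ∀ k < ℓ, Continuous (σ k)) :
    Continuous (fun ε => (ibpPostBounds d W b σ x ε ℓ).1) ∧
      Continuous (fun ε => (ibpPostBounds d W b σ x ε ℓ).2) := by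
  induction ℓ with
  | zero => constructor <;> simp only [ibpPostBounds] <;> fun_prop
  | succ ℓ ih =>
    obtain ⟨hlb, hub⟩ := ih fun k hk => hσ k (hk.trans ℓ.lt_succ_self)
    have hσℓ := hσ ℓ ℓ.lt_succ_self
    exact ⟨continuous_pi fun i => hσℓ.comp ((continuous_apply i).comp
        (hlb.ibpAffineLower hub)),
      continuous_pi fun i => hσℓ.comp ((continuous_apply i).comp
        (hlb.ibpAffineUpper hub))⟩

variable {σ} (L' : ℕ)

theorem monotone_ibpOutUpper (hσ : ∀ k < L', Monotone (σ k)) :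
    Monotone (ibpOutUpper d W b σ x L') :=
  have ⟨hlb, hub⟩ := ibpPostBounds_fst_antitone_snd_monotone d W b σ x L' hσ
  fun _ _ h => ibpAffineUpper_mono (hlb h) (hub h)

theorem antitone_ibpOutLower (hσ : ∀ k < L', Monotone (σ k)) :
    Antitone (ibpOutLower d W b σ x L') :=
  have ⟨hlb, hub⟩ := ibpPostBounds_fst_antitone_snd_monotone d W b σ x L' hσ
  fun _ _ h => ibpAffineLower_anti (hlb h) (hub h)

theorem continuous_ibpOutUpper (hσ : ∀ k < L', Continuous (σ k)) :
    Continuous (ibpOutUpper d W b σ x L') :=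
  have ⟨hlb, hub⟩ := continuous_ibpPostBounds d W b σ x L' hσ
  hlb.ibpAffineUpper hub

theorem continuous_ibpOutLower (hσ : ∀ k < L', Continuous (σ k)) :
    Continuous (ibpOutLower d W b σ x L') :=
  have ⟨hlb, hub⟩ := continuous_ibpPostBounds d W b σ x L' hσ
  hlb.ibpAffineLower hub

end Network

/-- For an `L`-layer feed-forward network (here `L = L' + 1 ≥ 1`) with
monotonically non-decreasing continuous activations `σ⁽ℓ⁾` for the hidden layers
`ℓ = 1, …, L − 1`, each coordinate of the final-layer IBP upper bound
`ε ↦ z̄⁽ᴸ⁾(ε)` is monotonically non-decreasing and continuous on `[0, ∞)`, and each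
coordinate of the final-layer IBP lower bound `ε ↦ z̲⁽ᴸ⁾(ε)` is monotonically
non-increasing and continuous on `[0, ∞)`. -/
theorem ibp_output_bounds_monotone_continuous
    (L' : ℕ) (d : ℕ → ℕ)
    (W : ∀ ℓ : ℕ, Matrix (Fin (d (ℓ + 1))) (Fin (d ℓ)) ℝ)
    (b : ∀ ℓ : ℕ, Fin (d (ℓ + 1)) → ℝ)
    (σ : ℕ → ℝ → ℝ)
    (hσ : ∀ ℓ < L', Monotone (σ ℓ) ∧ Continuous (σ ℓ))
    (x : Fin (d 0) → ℝ) :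
    ∀ i : Fin (d (L' + 1)),
      MonotoneOn (fun ε => ibpOutUpper d W b σ x L' ε i) (Set.Ici 0) ∧
      ContinuousOn (fun ε => ibpOutUpper d W b σ x L' ε i) (Set.Ici 0) ∧
      AntitoneOn (fun ε => ibpOutLower d W b σ x L' ε i) (Set.Ici 0) ∧
      ContinuousOn (fun ε => ibpOutLower d W b σ x L' ε i) (Set.Ici 0) := by
  intro i
  have hmono k hk := (hσ k hk).1
  have hcont k hk := (hσ k hk).2
  exact ⟨((Function.monotone_eval i).comp (monotone_ibpOutUpper d W b x L' hmono)).monotoneOn _,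
    ((continuous_apply i).comp (continuous_ibpOutUpper d W b x L' hcont)).continuousOn,
    ((Function.monotone_eval i).comp_antitone
      (antitone_ibpOutLower d W b x L' hmono)).antitoneOn _,
    ((continuous_apply i).comp (continuous_ibpOutLower d W b x L' hcont)).continuousOn⟩
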